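/- arXiv:2207.09368 — 3 statements merged into one kernel-verified Lean document; each statement's English description precedes it below -/
import Mathlib

section
/- Let λ be a plane of the Bloch sphere (a two-element subset of {X,Y,Z}) and P the Pauli not in λ. Let |φ⟩ and |φ'⟩ be states of a finite register V of qubits and u ∈ V. If for all angles α, ⟨+^λ_α|_u |φ⟩ and ⟨+^λ_α|_u |φ'⟩ are equal up to a global phase, and |⟨+^λ_α|_u |φ⟩| = 1/√2 (with |φ⟩ normalized), then either |φ⟩ ≃ |φ'⟩ up to global phase, or there exist x ∈ {0,1} and a state |ψ⟩ on V∖{u} such that |φ⟩ ≃ |+^P_{xπ}⟩_u ⊗ |ψ⟩ and |φ'⟩ ≃ |−^P_{xπ}⟩_u ⊗ |ψ⟩. -/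
/-- The Pauli matrices, indexed by `Fin 3`: `0 ↦ X`, `1 ↦ Y`, `2 ↦ Z`. -/
noncomputable def pauliMat : Fin 3 → Matrix (Fin 2) (Fin 2) ℂ :=
  ![!![0, 1; 1, 0], !![0, -Complex.I; Complex.I, 0], !![1, 0; 0, -1]]

/-- `|+^P_0⟩`, the `+1` eigenvector of the Pauli `P`. -/
noncomputable def plusVec : Fin 3 → Fin 2 → ℂ :=
  ![![(Real.sqrt 2 : ℂ)⁻¹, (Real.sqrt 2 : ℂ)⁻¹],
    ![(Real.sqrt 2 : ℂ)⁻¹, Complex.I * (Real.sqrt 2 : ℂ)⁻¹],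
    ![1, 0]]

/-- `|−^P_0⟩`, the `−1` eigenvector of the Pauli `P`. -/
noncomputable def minusVec : Fin 3 → Fin 2 → ℂ :=
  ![![(Real.sqrt 2 : ℂ)⁻¹, -(Real.sqrt 2 : ℂ)⁻¹],
    ![(Real.sqrt 2 : ℂ)⁻¹, -(Complex.I * (Real.sqrt 2 : ℂ)⁻¹)],
    ![0, 1]]

/-- `|+^λ_α⟩ = (|+^P_0⟩ + e^{iα} |−^P_0⟩)/√2`, where `P` is the Pauli complementary to the
plane `λ` (the plane `λ` consists of the two Paulis distinct from `P`). -/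
noncomputable def planePlus (P : Fin 3) (α : ℝ) : Fin 2 → ℂ :=
  (Real.sqrt 2 : ℂ)⁻¹ • (plusVec P + Complex.exp (α * Complex.I) • minusVec P)

/-- `|−^λ_α⟩ = (|+^P_0⟩ − e^{iα} |−^P_0⟩)/√2`. -/
noncomputable def planeMinus (P : Fin 3) (α : ℝ) : Fin 2 → ℂ :=
  (Real.sqrt 2 : ℂ)⁻¹ • (plusVec P - Complex.exp (α * Complex.I) • minusVec P)
/-- Squared norm of a state given by its amplitude function. -/
noncomputable def norm2 {ι : Type*} [Fintype ι] (ψ : ι → ℂ) : ℝ := ∑ s, ‖ψ s‖ ^ 2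

/-- Partial inner product `⟨χ|_u |φ⟩`: contracting qubit `u` of `φ` with the bra of `χ`,
yielding a state of the register `V ∖ {u}`. -/
noncomputable def partialInner {V : Type*} [Fintype V] [DecidableEq V] (u : V)
    (χ : Fin 2 → ℂ) (φ : (V → Fin 2) → ℂ) : ({v : V // v ≠ u} → Fin 2) → ℂ :=
  fun t => ∑ b : Fin 2, (starRingEnd ℂ) (χ b) *
    φ (fun v => if h : v = u then b else t ⟨v, h⟩)

/-- `χ_u ⊗ ψ`: the state with qubit `u` in the single-qubit state `χ` and the rest of the
register in the state `ψ`. -/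
def tensorAt {V : Type*} [DecidableEq V] (u : V) (χ : Fin 2 → ℂ)
    (ψ : ({v : V // v ≠ u} → Fin 2) → ℂ) : (V → Fin 2) → ℂ :=
  fun s => χ (s u) * ψ (fun v => s v.1)

/-- `|+^P_{xπ}⟩`: for `x = 0` the `+1` eigenvector of `P`, for `x = 1` the `−1` eigenvector. -/
noncomputable def eigVec (P : Fin 3) : Fin 2 → Fin 2 → ℂ := ![plusVec P, minusVec P]

/-!
Write `φ = |+^P⟩_u ⊗ A + |−^P⟩_u ⊗ B` with `A = ⟨+^P|_u φ`, `B = ⟨−^P|_u φ`, and similarly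
`φ'` with `A'`, `B'`. Then `⟨+^λ_α|_u φ = (A + r B)/√2` with `r = e^{-iα}` running over the unit
circle, so the hypotheses say that `‖A + r B‖` is independent of `r`, which by polarization
means `A ⊥ B`, and that `A' + r B' = c_r (A + r B)` with `|c_r| = 1`; in particular `A' ⊥ B'`.
Taking `r = 1, −1, i`: if `A, B ≠ 0` they are independent, and comparing coefficients gives
`c_1 = c_{−1}`, whence `φ' = c_1 φ`. If `B = 0` then `A' = p A`, `B' = m A` with
`p, m = (c_1 ± c_{−1})/2`, and `A' ⊥ B'` forces `p = 0` or `m = 0`: either `φ' = c_1 φ`, or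
`φ, φ'` are `|+^P⟩_u ⊗ A`, `|−^P⟩_u ⊗ A` up to phase. The case `A = 0` is symmetric.
-/

open Complex WithLp
open scoped InnerProductSpace

section InnerProductSpace

variable {E : Type*} [NormedAddCommGroup E] [InnerProductSpace ℂ E]

theorem inner_eq_zero_of_norm_add_smul_eq_const {x y : E} {C : ℝ}
    (h : ∀ r : ℂ, ‖r‖ = 1 → ‖x + r • y‖ = C) : ⟪x, y⟫_ℂ = 0 := by
  have h₁ := h 1 (by simp)
  have h₂ := h (-1) (by simp)
  have h₃ := h I (by simp)
  have h₄ := h (-I) (by simp)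
  simp only [one_smul, neg_smul, ← sub_eq_add_neg] at h₁ h₂ h₄
  rw [inner_eq_sum_norm_sq_div_four, h₁, h₂, RCLike.I_to_complex, h₃, h₄]
  ring

theorem eq_zero_of_smul_add_smul_eq_zero_of_inner_eq_zero {a b : E} (ha : a ≠ 0) (hb : b ≠ 0)
    (hab : ⟪a, b⟫_ℂ = 0) {s t : ℂ} (h : s • a + t • b = 0) : s = 0 ∧ t = 0 := by
  refine LinearIndependent.pair_iff.1 ?_ s t h
  refine linearIndependent_of_ne_zero_of_inner_eq_zero (fun i => ?_) fun i j hij => ?_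
  · fin_cases i <;> simpa
  · fin_cases i <;> fin_cases j <;> simp_all [inner_eq_zero_symm]

theorem eq_smul_and_eq_zero_or_eq_zero_and_eq_smul {a a' b' : E} {c₀ c₁ : ℂ}
    (hab' : ⟪a', b'⟫_ℂ = 0) (h₀ : a' + b' = c₀ • a) (h₁ : a' - b' = c₁ • a) :
    (a' = c₀ • a ∧ b' = 0) ∨ (a' = 0 ∧ b' = c₀ • a) := by
  have ha' : a' = ((c₀ + c₁) / 2) • a := by
    linear_combination (norm := module) (1 / 2 : ℂ) • h₀ + (1 / 2 : ℂ) • h₁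
  have hb' : b' = ((c₀ - c₁) / 2) • a := by
    linear_combination (norm := module) (1 / 2 : ℂ) • h₀ - (1 / 2 : ℂ) • h₁
  by_cases ha : a = 0
  · subst ha
    simp_all
  have hprod : (starRingEnd ℂ) ((c₀ + c₁) / 2) * ((c₀ - c₁) / 2) = 0 := by
    rw [ha', hb', inner_smul_left, inner_smul_right, ← mul_assoc] at hab'
    exact (mul_eq_zero.1 hab').resolve_right (inner_self_ne_zero.2 ha)
  rcases mul_eq_zero.1 hprod with hp | hm
  · have hc : c₁ = -c₀ := by linear_combination 2 * (map_eq_zero _).1 hp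
    subst hc
    right
    constructor
    · rw [ha']; simp
    · rw [hb']; congr 1; ring
  · have hc : c₁ = c₀ := by linear_combination -2 * hm
    subst hc
    left
    constructor
    · rw [ha']; congr 1; ring
    · rw [hb']; simp

theorem phase_eqs_trichotomy {a b a' b' : E} {c₀ c₁ c₂ : ℂ} (hab : ⟪a, b⟫_ℂ = 0)
    (hab' : ⟪a', b'⟫_ℂ = 0) (h₀ : a' + b' = c₀ • (a + b)) (h₁ : a' - b' = c₁ • (a - b))
    (h₂ : a' + I • b' = c₂ • (a + I • b)) :
    (a' = c₀ • a ∧ b' = c₀ • b) ∨ (b = 0 ∧ a' = 0 ∧ b' = c₀ • a) ∨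
      (a = 0 ∧ a' = c₀ • b ∧ b' = 0) := by
  by_cases hb : b = 0
  · subst hb
    rcases eq_smul_and_eq_zero_or_eq_zero_and_eq_smul hab' (by simpa using h₀)
      (by simpa using h₁) with h | h
    · exact Or.inl (by simpa using h)
    · exact Or.inr (Or.inl ⟨rfl, h⟩)
  by_cases ha : a = 0
  · subst ha
    rcases eq_smul_and_eq_zero_or_eq_zero_and_eq_smul (inner_eq_zero_symm.1 hab') (c₁ := c₁)
      (by simpa [add_comm] using h₀) (by linear_combination (norm := module) -h₁)
      with ⟨hb', ha'⟩ | ⟨hb', ha'⟩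
    · exact Or.inl (by simp [ha', hb'])
    · exact Or.inr (Or.inr ⟨rfl, ha', hb'⟩)
  obtain ⟨hs, ht⟩ := eq_zero_of_smul_add_smul_eq_zero_of_inner_eq_zero ha hb hab
    (s := (c₀ + c₁) / 2 + I * ((c₀ - c₁) / 2) - c₂)
    (t := (c₀ - c₁) / 2 + I * ((c₀ + c₁) / 2) - I * c₂)
    (by linear_combination (norm := module) h₂ - ((1 + I) / 2) • h₀ - ((1 - I) / 2) • h₁)
  have hc : c₁ = c₀ := by linear_combination I * hs - ht - (c₀ - c₁) / 2 * I_sq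
  subst hc
  left
  constructor
  · linear_combination (norm := module) (1 / 2 : ℂ) • h₀ + (1 / 2 : ℂ) • h₁
  · linear_combination (norm := module) (1 / 2 : ℂ) • h₀ - (1 / 2 : ℂ) • h₁

end InnerProductSpace

theorem conj_plusVec_mul_add_conj_minusVec_mul (P : Fin 3) (β γ : Fin 2) :
    (starRingEnd ℂ) (plusVec P γ) * plusVec P β + (starRingEnd ℂ) (minusVec P γ) * minusVec P β =
      if β = γ then 1 else 0 := by
  have h2 : ((Real.sqrt 2 : ℂ)⁻¹) ^ 2 = 1 / 2 := by
    rw [inv_pow, ← ofReal_pow, Real.sq_sqrt zero_le_two]; push_cast; ring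
  fin_cases P <;> fin_cases β <;> fin_cases γ <;> simp [plusVec, minusVec, conj_ofReal] <;>
    first
    | linear_combination 2 * h2
    | linear_combination 2 * h2 - 2 * ((Real.sqrt 2 : ℂ)⁻¹) ^ 2 * I_sq

theorem norm2_eq_norm_toLp_sq {ι : Type*} [Fintype ι] (ψ : ι → ℂ) :
    norm2 ψ = ‖(toLp 2 ψ : EuclideanSpace ℂ ι)‖ ^ 2 :=
  (EuclideanSpace.norm_sq_eq _).symm

section Register

variable {V : Type*} [DecidableEq V] (u : V)

theorem tensorAt_smul (χ : Fin 2 → ℂ) (c : ℂ) (ψ : ({v : V // v ≠ u} → Fin 2) → ℂ) :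
    tensorAt u χ (c • ψ) = c • tensorAt u χ ψ := by
  funext s
  simp only [tensorAt, Pi.smul_apply, smul_eq_mul]
  ring

theorem tensorAt_zero (χ : Fin 2 → ℂ) : tensorAt u χ 0 = 0 := by
  funext s
  simp [tensorAt]

variable [Fintype V]

theorem partialInner_add_left (χ χ' : Fin 2 → ℂ) (φ : (V → Fin 2) → ℂ) :
    partialInner u (χ + χ') φ = partialInner u χ φ + partialInner u χ' φ := by
  funext t
  simp only [partialInner, Pi.add_apply, map_add, add_mul, Finset.sum_add_distrib]

theorem partialInner_smul_left (c : ℂ) (χ : Fin 2 → ℂ) (φ : (V → Fin 2) → ℂ) :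
    partialInner u (c • χ) φ = (starRingEnd ℂ) c • partialInner u χ φ := by
  funext t
  simp only [partialInner, Pi.smul_apply, smul_eq_mul, map_mul, Finset.mul_sum, mul_assoc]

theorem tensorAt_add_tensorAt_partialInner {χ₀ χ₁ : Fin 2 → ℂ}
    (h : ∀ β γ, (starRingEnd ℂ) (χ₀ γ) * χ₀ β + (starRingEnd ℂ) (χ₁ γ) * χ₁ β =
      if β = γ then 1 else 0) (f : (V → Fin 2) → ℂ) :
    tensorAt u χ₀ (partialInner u χ₀ f) + tensorAt u χ₁ (partialInner u χ₁ f) = f := by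
  funext s
  calc (tensorAt u χ₀ (partialInner u χ₀ f) + tensorAt u χ₁ (partialInner u χ₁ f)) s
      = ∑ b, ((starRingEnd ℂ) (χ₀ b) * χ₀ (s u) + (starRingEnd ℂ) (χ₁ b) * χ₁ (s u)) *
          f (fun v => if v = u then b else s v) := by
        simp only [Pi.add_apply, tensorAt, partialInner, Finset.mul_sum, ← Finset.sum_add_distrib]
        refine Finset.sum_congr rfl fun b _ => ?_
        simp only [dite_eq_ite]
        ring
    _ = f s := by
        simp only [h, ite_mul, one_mul, zero_mul, Finset.sum_ite_eq, Finset.mem_univ, if_true]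
        congr 1
        funext v
        split_ifs with hv <;> simp [hv]

variable (P : Fin 3)

theorem exists_partialInner_planePlus_eq {r : ℂ} (hr : ‖r‖ = 1) :
    ∃ α : ℝ, ∀ f : (V → Fin 2) → ℂ, partialInner u (planePlus P α) f =
      (Real.sqrt 2 : ℂ)⁻¹ • (partialInner u (plusVec P) f + r • partialInner u (minusVec P) f) := by
  refine ⟨arg ((starRingEnd ℂ) r), fun f => ?_⟩
  have hα : exp (arg ((starRingEnd ℂ) r) * I) = (starRingEnd ℂ) r := by
    simpa [hr] using norm_mul_exp_arg_mul_I ((starRingEnd ℂ) r)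
  rw [planePlus, hα, partialInner_smul_left, partialInner_add_left, partialInner_smul_left]
  simp [conj_ofReal]

theorem norm_add_smul_partialInner_eq_one {φ : (V → Fin 2) → ℂ}
    (hhalf : ∀ α : ℝ, norm2 (partialInner u (planePlus P α) φ) = 1 / 2) {r : ℂ} (hr : ‖r‖ = 1) :
    ‖(toLp 2 (partialInner u (plusVec P) φ) + r • toLp 2 (partialInner u (minusVec P) φ) :
      EuclideanSpace ℂ ({v : V // v ≠ u} → Fin 2))‖ = 1 := by
  obtain ⟨α, hα⟩ := exists_partialInner_planePlus_eq u P hr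
  have h := hhalf α
  rw [hα, norm2_eq_norm_toLp_sq, toLp_smul, toLp_add, toLp_smul, norm_smul, mul_pow, norm_inv,
    norm_real, Real.norm_of_nonneg (Real.sqrt_nonneg 2), inv_pow, Real.sq_sqrt zero_le_two] at h
  exact (pow_eq_one_iff_of_nonneg (norm_nonneg _) two_ne_zero).1 (by linarith)

theorem exists_add_smul_partialInner_eq_smul {φ φ' : (V → Fin 2) → ℂ}
    (hsim : ∀ α : ℝ, ∃ c : ℂ, ‖c‖ = 1 ∧
      partialInner u (planePlus P α) φ' = c • partialInner u (planePlus P α) φ)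
    {r : ℂ} (hr : ‖r‖ = 1) :
    ∃ c : ℂ, ‖c‖ = 1 ∧
      (toLp 2 (partialInner u (plusVec P) φ') + r • toLp 2 (partialInner u (minusVec P) φ') :
        EuclideanSpace ℂ ({v : V // v ≠ u} → Fin 2)) =
      c • (toLp 2 (partialInner u (plusVec P) φ) + r • toLp 2 (partialInner u (minusVec P) φ)) := by
  obtain ⟨α, hα⟩ := exists_partialInner_planePlus_eq u P hr
  obtain ⟨c, hc, h⟩ := hsim α
  rw [hα, hα, smul_comm c] at h
  exact ⟨c, hc, by simpa using congrArg (toLp 2) (smul_right_injective _ (by simp) h)⟩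

end Register

theorem stmt6_general {V : Type*} [Fintype V] [DecidableEq V] (u : V) (P : Fin 3)
    (φ φ' : (V → Fin 2) → ℂ)
    (hsim : ∀ α : ℝ, ∃ c : ℂ, ‖c‖ = 1 ∧
      partialInner u (planePlus P α) φ' = c • partialInner u (planePlus P α) φ)
    (hhalf : ∀ α : ℝ, norm2 (partialInner u (planePlus P α) φ) = 1 / 2) :
    (∃ c : ℂ, ‖c‖ = 1 ∧ φ' = c • φ) ∨
    ∃ (x : Fin 2) (ψ : ({v : V // v ≠ u} → Fin 2) → ℂ),
      (∃ c : ℂ, ‖c‖ = 1 ∧ φ = c • tensorAt u (eigVec P x) ψ) ∧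
      (∃ c : ℂ, ‖c‖ = 1 ∧ φ' = c • tensorAt u (eigVec P (x + 1)) ψ) := by
  have hrec := tensorAt_add_tensorAt_partialInner u (conj_plusVec_mul_add_conj_minusVec_mul P) φ
  have hrec' := tensorAt_add_tensorAt_partialInner u (conj_plusVec_mul_add_conj_minusVec_mul P) φ'
  have hnorm := fun r (hr : ‖r‖ = 1) => norm_add_smul_partialInner_eq_one u P hhalf hr
  have hphase := fun r (hr : ‖r‖ = 1) => exists_add_smul_partialInner_eq_smul u P hsim hr
  set A := partialInner u (plusVec P) φ
  set B := partialInner u (minusVec P) φ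
  set A' := partialInner u (plusVec P) φ'
  set B' := partialInner u (minusVec P) φ'
  have hAB := inner_eq_zero_of_norm_add_smul_eq_const hnorm
  have hAB' := inner_eq_zero_of_norm_add_smul_eq_const (C := 1) fun r hr => by
    obtain ⟨c, hc, h⟩ := hphase r hr
    rw [h, norm_smul, hc, one_mul, hnorm r hr]
  obtain ⟨c₀, hc₀, h₀⟩ := hphase 1 norm_one
  obtain ⟨c₁, -, h₁⟩ := hphase (-1) (by simp)
  obtain ⟨c₂, -, h₂⟩ := hphase I (by simp)
  rcases phase_eqs_trichotomy hAB hAB' (by simpa using h₀) (by simpa [sub_eq_add_neg] using h₁) h₂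
    with ⟨ha', hb'⟩ | ⟨hb, ha', hb'⟩ | ⟨ha, ha', hb'⟩
  · simp only [← toLp_smul, (toLp_injective 2).eq_iff] at ha' hb'
    refine Or.inl ⟨c₀, hc₀, ?_⟩
    rw [← hrec, ← hrec', ha', hb', tensorAt_smul, tensorAt_smul, smul_add]
  · simp only [← toLp_smul, (toLp_injective 2).eq_iff, ofLp_zero] at hb ha' hb'
    refine Or.inr ⟨0, A, ⟨1, norm_one, ?_⟩, ⟨c₀, hc₀, ?_⟩⟩
    · rw [← hrec, hb, tensorAt_zero, add_zero, one_smul]; rfl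
    · rw [← hrec', ha', hb', tensorAt_zero, zero_add, tensorAt_smul]; rfl
  · simp only [← toLp_smul, (toLp_injective 2).eq_iff, ofLp_zero] at ha ha' hb'
    refine Or.inr ⟨1, B, ⟨1, norm_one, ?_⟩, ⟨c₀, hc₀, ?_⟩⟩
    · rw [← hrec, ha, tensorAt_zero, zero_add, one_smul]; rfl
    · rw [← hrec', ha', hb', tensorAt_zero, add_zero, tensorAt_smul]; rfl

/-- Lemma `lem:meas`: if `|φ⟩` and `|φ'⟩` agree up to phase after any measurement of qubit `u`
in the plane `λ` complementary to `P`, all outcomes having probability `1/2`, then either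
`|φ⟩ ≃ |φ'⟩`, or qubit `u` factors out as opposite `P`-eigenstates:
`|φ⟩ ≃ |+^P_{xπ}⟩_u ⊗ |ψ⟩` and `|φ'⟩ ≃ |−^P_{xπ}⟩_u ⊗ |ψ⟩`. -/
theorem stmt6 {V : Type*} [Fintype V] [DecidableEq V] (u : V) (P : Fin 3)
    (φ φ' : (V → Fin 2) → ℂ) (hφ : norm2 φ = 1) (hφ' : norm2 φ' = 1)
    (hsim : ∀ α : ℝ, ∃ c : ℂ, ‖c‖ = 1 ∧
      partialInner u (planePlus P α) φ' = c • partialInner u (planePlus P α) φ)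
    (hhalf : ∀ α : ℝ, norm2 (partialInner u (planePlus P α) φ) = 1 / 2) :
    (∃ c : ℂ, ‖c‖ = 1 ∧ φ' = c • φ) ∨
    ∃ (x : Fin 2) (ψ : ({v : V // v ≠ u} → Fin 2) → ℂ),
      (∃ c : ℂ, ‖c‖ = 1 ∧ φ = c • tensorAt u (eigVec P x) ψ) ∧
      (∃ c : ℂ, ‖c‖ = 1 ∧ φ' = c • tensorAt u (eigVec P (x + 1)) ψ) :=
  stmt6_general u P φ φ' hsim hhalf
end

section
/- Let G be a finite simple graph with graph state |G⟩, A ⊆ V(G), and P_A = {r_i P_i}_{i∈A} a collection of signed Pauli observables (P_i ∈ {X,Y,Z}, r_i ∈ {±1}). Define ⟨P_A| := ∏_{i∈A} ⟨+^{P_i}_{r_i π}|, x(P_A) := {i ∈ A : P_i ∈ {X,Y}}, z(P_A) := {i ∈ A : P_i ∈ {Y,Z}}. Suppose |⟨P_A| |G⟩| = 2^{−|A|/2}. Then for any multi-qubit Pauli operator M: M ⟨P_A||G⟩ ≃ ⟨P_A||G⟩ (equal up to global phase) if and only if there exists S ⊆ V(G) with S ∩ z(P_A) = Odd(S) ∩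 x(P_A) and M ≃ X_{S ∖ x(P_A)} Z_{Odd(S) ∖ z(P_A)}. -/
/-- `Odd(D)`: the set of vertices having an odd number of neighbours in `D`. -/
def oddNbhd {V : Type*} [Fintype V] [DecidableEq V] (G : SimpleGraph V) [DecidableRel G.Adj]
    (D : Finset V) : Finset V :=
  Finset.univ.filter fun v => Odd ((G.neighborFinset v ∩ D).card)

/-- The graph state `|G⟩ = (∏_{(u,v) ∈ E(G)} CZ_{u,v}) |+⟩^{⊗V}`. -/
noncomputable def graphState {V : Type*} [Fintype V] [DecidableEq V] (G : SimpleGraph V)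
    [DecidableRel G.Adj] : (V → Fin 2) → ℂ :=
  fun s => ((Real.sqrt 2 : ℂ))⁻¹ ^ (Fintype.card V) *
    (-1 : ℂ) ^ ((Finset.univ.filter fun e : V × V =>
      G.Adj e.1 e.2 ∧ s e.1 = 1 ∧ s e.2 = 1).card / 2)

/-- Pauli `X` applied on every qubit of `A`. -/
def Xop {V : Type*} [DecidableEq V] (A : Finset V) (ψ : (V → Fin 2) → ℂ) : (V → Fin 2) → ℂ :=
  fun s => ψ fun v => if v ∈ A then s v + 1 else s v

/-- Pauli `Z` applied on every qubit of `B`. -/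
def Zop {V : Type*} [DecidableEq V] (B : Finset V) (ψ : (V → Fin 2) → ℂ) : (V → Fin 2) → ℂ :=
  fun s => (-1 : ℂ) ^ (B.filter fun v => s v = 1).card * ψ s
/-- Applying the bras `⟨χ_v|` on every qubit `v ∈ B` of a state `ψ`: the resulting state of
the remaining register is encoded as an amplitude function supported on assignments that
vanish on `B`. -/
noncomputable def braApply {V : Type*} [Fintype V] [DecidableEq V] (B : Finset V)
    (χ : V → Fin 2 → ℂ) (ψ : (V → Fin 2) → ℂ) : (V → Fin 2) → ℂ :=
  fun t => if ∀ v ∈ B, t v = 0 then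
    ∑ s : V → Fin 2, (if ∀ v ∉ B, s v = t v then
      (∏ v ∈ B, (starRingEnd ℂ) (χ v (s v))) * ψ s else 0)
  else 0

/-!
The amplitudes of the graph state satisfy `|G⟩(s + 1_S) = ± (-1)^{|s ∩ Odd(S)|} |G⟩(s)`, the sign
coming from the number of edges inside `S`; equivalently `X_S Z_{Odd(S)}` stabilises `|G⟩` up to
sign.

If `S` satisfies the condition on `A`, then on every measured qubit `i` the local factor
`X^{[i ∈ S]} Z^{[i ∈ Odd(S)]}` is, up to phase, the identity or the measured Pauli `P_i`, so the bra
`⟨P_A|` absorbs it and what remains, `X_{S ∖ A} Z_{Odd(S) ∖ A}`, stabilises `⟨P_A|G⟩` up to phase.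

Conversely, if `M = X_B Z_C` stabilises `⟨P_A|G⟩`, which is nonzero by strongness, then
`⟨G|P_A⟩ M ⟨P_A|G⟩ ≠ 0`. This overlap is a double sum over basis states `s` and `s + d` with `d`
supported in `A`, so some `d` contributes a nonzero sum over `s`; by the amplitude formula that sum
is a product over the vertices of one-qubit sums. Their nonvanishing forces `C = Odd(S) ∖ A` for
`S = B ∪ supp d` and, on each `i ∈ A`, that `X^{[i ∈ S]} Z^{[i ∈ Odd(S)]}` is `I` or `P_i` up to
phase, which is the condition on `A`.
-/

open Finset ComplexConjugate

lemma neg_one_pow_val_add (a b : Fin 2) :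
    (-1 : ℂ) ^ (a + b).val = (-1) ^ a.val * (-1) ^ b.val := by
  fin_cases a <;> fin_cases b <;> simp [show (1 + 1 : Fin 2) = 0 from rfl]

lemma add_add_cancel_fin_two {V : Type*} (s x : V → Fin 2) : s + x + x = s := by
  funext v
  simp only [Pi.add_apply]
  generalize s v = a
  generalize x v = b
  decide +revert

section ZSign

variable {V : Type*}

def zSign (C : Finset V) (t : V → Fin 2) : ℂ := ∏ v ∈ C, (-1) ^ (t v).val

lemma zSign_add (C : Finset V) (s t : V → Fin 2) : zSign C (s + t) = zSign C s * zSign C t := by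
  simp only [zSign, Pi.add_apply, neg_one_pow_val_add, prod_mul_distrib]

lemma zSign_mul_self (C : Finset V) (t : V → Fin 2) : zSign C t * zSign C t = 1 := by
  rw [zSign, ← prod_mul_distrib]
  exact prod_eq_one fun v _ => by rw [← pow_add, Even.neg_one_pow ⟨_, rfl⟩]

lemma norm_zSign (C : Finset V) (t : V → Fin 2) : ‖zSign C t‖ = 1 := by
  simp [zSign]

lemma zSign_congr {C : Finset V} {s t : V → Fin 2} (h : ∀ v ∈ C, s v = t v) :
    zSign C s = zSign C t :=
  prod_congr rfl fun v hv => by rw [h v hv]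

end ZSign

section PauliOps

variable {V : Type*} [DecidableEq V]

def indicatorBits (S : Finset V) : V → Fin 2 := fun v => if v ∈ S then 1 else 0

lemma indicatorBits_union {B D : Finset V} (h : Disjoint B D) :
    indicatorBits (B ∪ D) = indicatorBits B + indicatorBits D := by
  funext v
  by_cases hB : v ∈ B <;> by_cases hD : v ∈ D
  · exact absurd hD (disjoint_left.mp h hB)
  all_goals simp [indicatorBits, hB, hD]

lemma indicatorBits_of_mem {S : Finset V} {v : V} (h : v ∈ S) : indicatorBits S v = 1 :=
  if_pos h

lemma indicatorBits_of_notMem {S : Finset V} {v : V} (h : v ∉ S) : indicatorBits S v = 0 :=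
  if_neg h

lemma indicatorBits_eq_iff {S T : Finset V} {v : V} :
    indicatorBits S v = indicatorBits T v ↔ (v ∈ S ↔ v ∈ T) := by
  by_cases hS : v ∈ S <;> by_cases hT : v ∈ T <;> simp [indicatorBits, hS, hT]

lemma eq_indicatorBits_filter [Fintype V] (d : V → Fin 2) :
    d = indicatorBits (univ.filter fun v => d v = 1) := by
  funext v
  rcases Fin.exists_fin_two.mp ⟨d v, rfl⟩ with h | h <;> simp [indicatorBits, h]

lemma zSign_indicatorBits_of_disjoint {C D : Finset V} (h : Disjoint C D) :
    zSign C (indicatorBits D) = 1 :=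
  prod_eq_one fun v hv => by
    rw [indicatorBits_of_notMem (disjoint_left.mp h hv)]; rfl

lemma zSign_union {C E : Finset V} (h : Disjoint C E) (t : V → Fin 2) :
    zSign (C ∪ E) t = zSign C t * zSign E t :=
  prod_union h

lemma Xop_apply (B : Finset V) (ψ : (V → Fin 2) → ℂ) (t : V → Fin 2) :
    Xop B ψ t = ψ (t + indicatorBits B) := by
  unfold Xop
  congr 1
  funext v
  by_cases h : v ∈ B <;> simp [indicatorBits, h]

lemma Zop_apply (C : Finset V) (ψ : (V → Fin 2) → ℂ) (t : V → Fin 2) :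
    Zop C ψ t = zSign C t * ψ t := by
  rw [Zop, zSign, prod_pow_eq_pow_sum, card_filter]
  congr 2
  refine sum_congr rfl fun v _ => ?_
  rcases Fin.exists_fin_two.mp ⟨t v, rfl⟩ with h | h <;> simp [h]

lemma Xop_smul (B : Finset V) (c : ℂ) (ψ : (V → Fin 2) → ℂ) : Xop B (c • ψ) = c • Xop B ψ :=
  rfl

lemma Zop_smul (C : Finset V) (c : ℂ) (ψ : (V → Fin 2) → ℂ) : Zop C (c • ψ) = c • Zop C ψ := by
  funext t
  simp only [Zop_apply, Pi.smul_apply, smul_eq_mul]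
  ring

lemma Xop_union {B D : Finset V} (h : Disjoint B D) (ψ : (V → Fin 2) → ℂ) :
    Xop (B ∪ D) ψ = Xop B (Xop D ψ) := by
  funext t
  simp only [Xop_apply, indicatorBits_union h, add_assoc]

lemma Zop_union {C E : Finset V} (h : Disjoint C E) (ψ : (V → Fin 2) → ℂ) :
    Zop (C ∪ E) ψ = Zop C (Zop E ψ) := by
  funext t
  simp only [Zop_apply, zSign_union h, mul_assoc]

lemma Zop_Xop_of_disjoint {C D : Finset V} (h : Disjoint C D) (ψ : (V → Fin 2) → ℂ) :
    Zop C (Xop D ψ) = Xop D (Zop C ψ) := by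
  funext t
  simp only [Zop_apply, Xop_apply, zSign_add, zSign_indicatorBits_of_disjoint h, mul_one]

lemma zSign_eq_prod_indicatorBits {A E : Finset V} (hE : E ⊆ A) (s : V → Fin 2) :
    zSign E s = ∏ v ∈ A, (-1) ^ ((indicatorBits E v).val * (s v).val) := by
  rw [zSign, ← prod_subset hE fun v _ hv => by
    rw [indicatorBits_of_notMem hv, Fin.val_zero, zero_mul, pow_zero]]
  exact prod_congr rfl fun v hv => by rw [indicatorBits_of_mem hv, Fin.val_one, one_mul]

end PauliOps

section AdjPairs

variable {V : Type*} [Fintype V] (G : SimpleGraph V) [DecidableRel G.Adj]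

def adjPairs : Finset (V × V) := univ.filter fun e => G.Adj e.1 e.2

lemma sum_adjPairs_swap {M : Type*} [AddCommMonoid M] (f : V → V → M) :
    ∑ e ∈ adjPairs G, f e.2 e.1 = ∑ e ∈ adjPairs G, f e.1 e.2 :=
  sum_nbij' Prod.swap Prod.swap (by simp [adjPairs, G.adj_comm]) (by simp [adjPairs, G.adj_comm])
    (by simp) (by simp) (by simp)

lemma sum_adjPairs_antisymm (f : V → V → ℤ) : ∑ e ∈ adjPairs G, (f e.1 e.2 - f e.2 e.1) = 0 := by
  rw [sum_sub_distrib, sum_adjPairs_swap, sub_self]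

lemma sum_adjPairs_eq_sum_neighborFinset {M : Type*} [AddCommMonoid M] (f : V → V → M) :
    ∑ e ∈ adjPairs G, f e.1 e.2 = ∑ v, ∑ u ∈ G.neighborFinset v, f v u := by
  rw [adjPairs, sum_filter, ← univ_product_univ, sum_product]
  refine sum_congr rfl fun v _ => ?_
  rw [SimpleGraph.neighborFinset_eq_filter, sum_filter]

/-- Twice the number of edges of `G` inside the support of `s`. -/
def adjPairCount (s : V → Fin 2) : ℕ :=
  (univ.filter fun e : V × V => G.Adj e.1 e.2 ∧ s e.1 = 1 ∧ s e.2 = 1).card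

lemma even_adjPairCount (s : V → Fin 2) : Even (adjPairCount G s) := by
  rw [← ZMod.natCast_eq_zero_iff_even, adjPairCount, card_eq_sum_ones, Nat.cast_sum, Nat.cast_one]
  refine sum_involution (fun e _ => e.swap) (fun _ _ => by decide) (fun e he _ h => ?_)
    (fun e he => ?_) (fun e _ => e.swap_swap)
  · simp only [mem_filter] at he
    exact G.ne_of_adj he.2.1 (congrArg Prod.snd h)
  · simp only [mem_filter, mem_univ, true_and, Prod.fst_swap, Prod.snd_swap] at he ⊢
    exact ⟨he.1.symm, he.2.2, he.2.1⟩

lemma adjPairCount_eq_sum (s : V → Fin 2) :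
    (adjPairCount G s : ℤ) = ∑ e ∈ adjPairs G, ((s e.1).val * (s e.2).val : ℤ) := by
  rw [adjPairCount, adjPairs, ← filter_filter, card_filter]
  push_cast
  refine sum_congr rfl fun e _ => ?_
  rcases Fin.exists_fin_two.mp ⟨s e.1, rfl⟩ with h₁ | h₁ <;>
    rcases Fin.exists_fin_two.mp ⟨s e.2, rfl⟩ with h₂ | h₂ <;> simp [h₁, h₂]

lemma adjPairCount_add (s w : V → Fin 2) : ∃ m : ℤ,
    (adjPairCount G (s + w) : ℤ) = adjPairCount G s + adjPairCount G w
      + 2 * ∑ e ∈ adjPairs G, ((s e.1).val * (w e.2).val : ℤ) + 4 * m := by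
  set a : V → ℤ := fun v => (s v).val
  set b : V → ℤ := fun v => (w v).val
  have hval : ∀ v, (((s + w) v).val : ℤ) = a v + b v - 2 * a v * b v := fun v => by
    simp only [a, b, Pi.add_apply]
    rcases Fin.exists_fin_two.mp ⟨s v, rfl⟩ with h₁ | h₁ <;>
      rcases Fin.exists_fin_two.mp ⟨w v, rfl⟩ with h₂ | h₂ <;> simp [h₁, h₂]
  refine ⟨∑ e ∈ adjPairs G, (a e.1 * b e.1 * a e.2 * b e.2 - a e.1 * b e.1 * a e.2
    - a e.1 * b e.1 * b e.2), ?_⟩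
  -- the expansion differs from the claim by an antisymmetric sum
  have key := sum_adjPairs_antisymm G fun x y =>
    b x * a y - 2 * a x * a y * b y - 2 * b x * a y * b y
  rw [adjPairCount_eq_sum, adjPairCount_eq_sum, adjPairCount_eq_sum, mul_sum, mul_sum,
    ← sum_add_distrib, ← sum_add_distrib, ← sum_add_distrib, ← sub_eq_zero, ← sum_sub_distrib,
    ← key]
  refine sum_congr rfl fun e _ => ?_
  rw [hval, hval]
  ring

lemma I_pow_adjPairCount_add (s w : V → Fin 2) :
    Complex.I ^ adjPairCount G (s + w) = Complex.I ^ adjPairCount G s * Complex.I ^ adjPairCount G w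
      * (-1) ^ ∑ e ∈ adjPairs G, (s e.1).val * (w e.2).val := by
  obtain ⟨m, hm⟩ := adjPairCount_add G s w
  have hI : ∀ n : ℕ, Complex.I ^ n = Complex.I ^ (n : ℤ) := fun n => (zpow_natCast _ _).symm
  have hneg : ∀ n : ℕ, (-1 : ℂ) ^ n = Complex.I ^ (2 * n : ℤ) := fun n => by
    rw [zpow_mul, zpow_ofNat, Complex.I_sq, zpow_natCast]
  rw [hI, hI, hI, hneg, hm, ← zpow_add₀ Complex.I_ne_zero, ← zpow_add₀ Complex.I_ne_zero,
    zpow_add₀ Complex.I_ne_zero, zpow_mul, show (4 : ℤ) = (4 : ℕ) from rfl, zpow_natCast,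
    Complex.I_pow_four, one_zpow, mul_one]
  push_cast
  rfl

end AdjPairs

section GraphState

variable {V : Type*} [Fintype V] [DecidableEq V] (G : SimpleGraph V) [DecidableRel G.Adj]

lemma graphState_apply (s : V → Fin 2) :
    graphState G s = (Real.sqrt 2 : ℂ)⁻¹ ^ Fintype.card V * Complex.I ^ adjPairCount G s := by
  obtain ⟨k, hk⟩ := even_adjPairCount G s
  change _ * (-1) ^ (adjPairCount G s / 2) = _
  rw [hk, ← two_mul, Nat.mul_div_cancel_left _ two_pos, pow_mul, Complex.I_sq]

lemma graphState_mul_self (s : V → Fin 2) :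
    graphState G s * graphState G s = (2 : ℂ)⁻¹ ^ Fintype.card V := by
  have hsqrt : (Real.sqrt 2 : ℂ)⁻¹ * (Real.sqrt 2 : ℂ)⁻¹ = 2⁻¹ := by
    rw [← mul_inv, ← Complex.ofReal_mul, Real.mul_self_sqrt zero_le_two, Complex.ofReal_ofNat]
  rw [graphState, mul_mul_mul_comm, ← mul_pow, hsqrt, ← pow_add, Even.neg_one_pow ⟨_, rfl⟩, mul_one]

lemma conj_graphState (s : V → Fin 2) : conj (graphState G s) = graphState G s := by
  simp [graphState, Complex.conj_ofReal]

lemma neg_one_pow_sum_adjPairs_indicatorBits (s : V → Fin 2) (S : Finset V) :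
    (-1 : ℂ) ^ ∑ e ∈ adjPairs G, (s e.1).val * (indicatorBits S e.2).val
      = zSign (oddNbhd G S) s := by
  rw [sum_adjPairs_eq_sum_neighborFinset G fun x y => (s x).val * (indicatorBits S y).val,
    ← prod_pow_eq_pow_sum, zSign, oddNbhd, prod_filter]
  refine prod_congr rfl fun v _ => ?_
  have hcard :
      ∑ u ∈ G.neighborFinset v, (indicatorBits S u).val = (G.neighborFinset v ∩ S).card := by
    simp only [indicatorBits, apply_ite Fin.val, Fin.val_one, Fin.val_zero, sum_boole,
      filter_mem_eq_inter, Nat.cast_id]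
  rw [← mul_sum, hcard, mul_comm, pow_mul]
  rcases Nat.even_or_odd (G.neighborFinset v ∩ S).card with h | h
  · rw [h.neg_one_pow, one_pow, if_neg (Nat.not_odd_iff_even.mpr h)]
  · rw [h.neg_one_pow, if_pos h]

lemma graphState_add_indicatorBits (s : V → Fin 2) (S : Finset V) :
    graphState G (s + indicatorBits S)
      = Complex.I ^ adjPairCount G (indicatorBits S) * zSign (oddNbhd G S) s * graphState G s := by
  rw [graphState_apply, graphState_apply, I_pow_adjPairCount_add,
    neg_one_pow_sum_adjPairs_indicatorBits]
  ring

theorem Xop_Zop_oddNbhd_graphState (S : Finset V) : ∃ c : ℂ, ‖c‖ = 1 ∧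
    Xop S (Zop (oddNbhd G S) (graphState G)) = c • graphState G := by
  refine ⟨zSign (oddNbhd G S) (indicatorBits S) * Complex.I ^ adjPairCount G (indicatorBits S),
    by simp [norm_zSign], ?_⟩
  funext t
  rw [Xop_apply, Zop_apply, graphState_add_indicatorBits, zSign_add, Pi.smul_apply, smul_eq_mul]
  linear_combination (zSign (oddNbhd G S) (indicatorBits S) * Complex.I ^ adjPairCount G
    (indicatorBits S) * graphState G t) * zSign_mul_self (oddNbhd G S) t

end GraphState

section SingleQubit

def xbit : Fin 3 → Fin 2 := ![1, 1, 0]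

def zbit : Fin 3 → Fin 2 := ![0, 1, 1]

/-- The exponents `(a, b)` for which `X^a Z^b` is proportional to `I` or to the Pauli `p`. -/
def pauliExponents (p : Fin 3) : Finset (Fin 2 × Fin 2) := {(0, 0), (xbit p, zbit p)}

lemma exists_conj_eigVec_add_mul_eq (p : Fin 3) (r : Fin 2) {a b : Fin 2}
    (h : (a, b) ∈ pauliExponents p) : ∃ μ : ℂ, ‖μ‖ = 1 ∧ ∀ u : Fin 2,
      conj (eigVec p r (u + a)) * (-1) ^ (b.val * u.val) = μ * conj (eigVec p r u) := by
  simp only [pauliExponents, mem_insert, mem_singleton, Prod.mk.injEq] at h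
  rcases h with ⟨rfl, rfl⟩ | ⟨rfl, rfl⟩
  · exact ⟨1, norm_one, fun u => by simp⟩
  · refine ⟨(-1) ^ r.val * if p = 1 then -Complex.I else 1, by split_ifs <;> simp, fun u => ?_⟩
    fin_cases p <;> fin_cases r <;> fin_cases u <;>
      simp [xbit, zbit, eigVec, plusVec, minusVec, Complex.conj_ofReal] <;> ring_nf <;>
      simp [Complex.I_sq]

lemma mem_pauliExponents_of_sum_ne_zero (p : Fin 3) (r a b : Fin 2)
    (h : ∑ u : Fin 2, eigVec p r u * conj (eigVec p r (u + a)) * (-1) ^ (b.val * u.val) ≠ 0) :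
    (a, b) ∈ pauliExponents p := by
  fin_cases p <;> fin_cases r <;> fin_cases a <;> fin_cases b <;>
    first
      | (simp [pauliExponents, xbit, zbit]; done)
      | (exfalso; apply h
         simp [eigVec, plusVec, minusVec, Fin.sum_univ_two, Complex.conj_ofReal] <;> ring_nf <;>
           simp [Complex.I_sq])

end SingleQubit

section BraApply

variable {V : Type*} [Fintype V] [DecidableEq V]

noncomputable def braWeight (A : Finset V) (χ : V → Fin 2 → ℂ) (s : V → Fin 2) : ℂ :=
  ∏ v ∈ A, conj (χ v (s v))

variable (A : Finset V) (χ : V → Fin 2 → ℂ)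

lemma braApply_apply (ψ : (V → Fin 2) → ℂ) (t : V → Fin 2) :
    braApply A χ ψ t = if ∀ v ∈ A, t v = 0 then
      ∑ s, if ∀ v ∉ A, s v = t v then braWeight A χ s * ψ s else 0 else 0 :=
  rfl

lemma braApply_smul (c : ℂ) (ψ : (V → Fin 2) → ℂ) : braApply A χ (c • ψ) = c • braApply A χ ψ := by
  funext t
  simp only [braApply_apply, Pi.smul_apply, smul_eq_mul, mul_ite, mul_zero, mul_sum]
  congr! 3
  ring

lemma Zop_braApply {C : Finset V} (hC : Disjoint C A) (ψ : (V → Fin 2) → ℂ) :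
    Zop C (braApply A χ ψ) = braApply A χ (Zop C ψ) := by
  funext t
  simp only [Zop_apply, braApply_apply, mul_ite, mul_zero, mul_sum]
  refine if_congr Iff.rfl (sum_congr rfl fun s _ => ?_) rfl
  split_ifs with hs
  · rw [zSign_congr fun v hv => (hs v (disjoint_left.mp hC hv)).symm]
    ring
  · rfl

lemma Xop_braApply {B : Finset V} (hB : Disjoint B A) (ψ : (V → Fin 2) → ℂ) :
    Xop B (braApply A χ ψ) = braApply A χ (Xop B ψ) := by
  have hBA : ∀ v ∈ A, indicatorBits B v = 0 := fun v hv =>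
    indicatorBits_of_notMem (disjoint_right.mp hB hv)
  funext t
  simp only [Xop_apply, braApply_apply, Pi.add_apply]
  refine if_congr (forall₂_congr fun v hv => by rw [hBA v hv, add_zero]) ?_ rfl
  rw [← Equiv.sum_comp (Equiv.addRight (indicatorBits B))]
  refine sum_congr rfl fun s _ => ?_
  have hweight : braWeight A χ (s + indicatorBits B) = braWeight A χ s :=
    prod_congr rfl fun v hv => by rw [Pi.add_apply, hBA v hv, add_zero]
  simp only [Equiv.coe_addRight, Pi.add_apply, add_left_inj, hweight]

/-- A bra that is a simultaneous eigenbra of the local Paulis `X^{D_i} Z^{E_i}` absorbs them. -/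
lemma braApply_Xop_Zop {D E : Finset V} (hD : D ⊆ A) (hE : E ⊆ A)
    (hχ : ∀ i ∈ A, ∃ μ : ℂ, ‖μ‖ = 1 ∧ ∀ u, conj (χ i (u + indicatorBits D i))
      * (-1) ^ ((indicatorBits E i).val * u.val) = μ * conj (χ i u))
    (ψ : (V → Fin 2) → ℂ) :
    ∃ c : ℂ, ‖c‖ = 1 ∧ braApply A χ (Xop D (Zop E ψ)) = c • braApply A χ ψ := by
  choose! μ hμ hμχ using hχ
  have hDA : ∀ v ∉ A, indicatorBits D v = 0 := fun v hv =>
    indicatorBits_of_notMem fun h => hv (hD h)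
  have hweight : ∀ s, braWeight A χ (s + indicatorBits D) * zSign E s
      = (∏ i ∈ A, μ i) * braWeight A χ s := fun s => by
    rw [zSign_eq_prod_indicatorBits hE, braWeight, braWeight, ← prod_mul_distrib,
      ← prod_mul_distrib]
    exact prod_congr rfl fun i hi => hμχ i hi (s i)
  refine ⟨∏ i ∈ A, μ i, by rw [norm_prod, prod_eq_one hμ], ?_⟩
  funext t
  simp only [braApply_apply, Xop_apply, Zop_apply, Pi.smul_apply, smul_eq_mul, mul_ite, mul_zero,
    mul_sum]
  refine if_congr Iff.rfl ?_ rfl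
  rw [← Equiv.sum_comp (Equiv.addRight (indicatorBits D))]
  refine sum_congr rfl fun s _ => ?_
  simp only [Equiv.coe_addRight, add_add_cancel_fin_two, Pi.add_apply]
  refine if_congr (forall₂_congr fun v hv => by rw [hDA v hv, add_zero]) ?_ rfl
  rw [← mul_assoc, hweight, mul_assoc]

lemma sum_conj_braApply_mul (ψ f : (V → Fin 2) → ℂ) :
    ∑ t, conj (braApply A χ ψ t) * f t
      = ∑ s, conj (braWeight A χ s * ψ s) * f fun v => if v ∈ A then 0 else s v := by
  have hproj : ∀ s t : V → Fin 2, ((∀ v ∈ A, t v = 0) ∧ ∀ v ∉ A, s v = t v)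
      ↔ (fun v => if v ∈ A then 0 else s v) = t := fun s t => by
    rw [funext_iff]
    refine ⟨fun h v => ?_, fun h => ⟨fun v hv => ?_, fun v hv => ?_⟩⟩
    · by_cases hv : v ∈ A
      · rw [if_pos hv, h.1 v hv]
      · rw [if_neg hv, h.2 v hv]
    · rw [← h v, if_pos hv]
    · rw [← h v, if_neg hv]
  calc ∑ t, conj (braApply A χ ψ t) * f t
      = ∑ t, ∑ s, if (fun v => if v ∈ A then 0 else s v) = t
          then conj (braWeight A χ s * ψ s) * f t else 0 := by
        refine sum_congr rfl fun t _ => ?_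
        rw [braApply_apply]
        by_cases ht : ∀ v ∈ A, t v = 0
        · rw [if_pos ht, map_sum, sum_mul]
          refine sum_congr rfl fun s _ => ?_
          rw [apply_ite conj, map_zero, ite_mul, zero_mul]
          exact if_congr ((and_iff_right ht).symm.trans (hproj s t)) rfl rfl
        · rw [if_neg ht, map_zero, zero_mul]
          exact (sum_eq_zero fun s _ => if_neg fun h => ht ((hproj s t).mpr h).1).symm
    _ = _ := by
        rw [sum_comm]
        simp only [sum_ite_eq, mem_univ, if_true]

lemma braApply_apply_eq_sum_add (ψ : (V → Fin 2) → ℂ) (s : V → Fin 2) :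
    braApply A χ ψ (fun v => if v ∈ A then 0 else s v)
      = ∑ d, if ∀ v ∉ A, d v = 0 then braWeight A χ (s + d) * ψ (s + d) else 0 := by
  rw [braApply_apply, if_pos fun v hv => if_pos hv, ← Equiv.sum_comp (Equiv.addLeft s)]
  refine sum_congr rfl fun d _ => if_congr (forall₂_congr fun v hv => ?_) rfl rfl
  simp only [Equiv.coe_addLeft, Pi.add_apply, if_neg hv, add_eq_left]

lemma sum_conj_braApply_mul_braApply (ψ ψ' : (V → Fin 2) → ℂ) :
    ∑ t, conj (braApply A χ ψ t) * braApply A χ ψ' t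
      = ∑ d, if ∀ v ∉ A, d v = 0 then
          ∑ s, conj (braWeight A χ s * ψ s) * (braWeight A χ (s + d) * ψ' (s + d)) else 0 := by
  simp only [sum_conj_braApply_mul, braApply_apply_eq_sum_add, mul_sum, mul_ite, mul_zero]
  rw [sum_comm]
  exact sum_congr rfl fun d _ => by split_ifs <;> simp

end BraApply

section PauliConditions

variable {V : Type*} [DecidableEq V] (A : Finset V) (P : V → Fin 3)

lemma indicatorBits_pair_mem_pauliExponents_iff (p : Fin 3) (S O : Finset V) (i : V) :
    (indicatorBits S i, indicatorBits O i) ∈ pauliExponents p ↔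
      (i ∈ S ∧ p ≠ 0 ↔ i ∈ O ∧ p ≠ 2) := by
  by_cases hS : i ∈ S <;> by_cases hO : i ∈ O <;> fin_cases p <;>
    simp [indicatorBits, pauliExponents, xbit, zbit, hS, hO]

lemma inter_filter_eq_iff_forall_mem_pauliExponents (S O : Finset V) :
    S ∩ A.filter (fun i => P i ≠ 0) = O ∩ A.filter (fun i => P i ≠ 2) ↔
      ∀ i ∈ A, (indicatorBits S i, indicatorBits O i) ∈ pauliExponents (P i) := by
  simp only [indicatorBits_pair_mem_pauliExponents_iff, Finset.ext_iff, mem_inter, mem_filter]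
  exact ⟨fun h i hi => by simpa [hi] using h i, fun h i => by by_cases hi : i ∈ A <;> simp [hi, h]⟩

variable {A P}

lemma sdiff_filter_ne_two_eq_sdiff {S O : Finset V}
    (h : S ∩ A.filter (fun i => P i ≠ 0) = O ∩ A.filter (fun i => P i ≠ 2)) :
    S \ A.filter (fun i => P i ≠ 2) = S \ A := by
  ext i
  have hi := Finset.ext_iff.mp h i
  simp only [mem_sdiff, mem_filter, mem_inter] at hi ⊢
  by_cases hP : P i = 2 <;> simp_all

lemma sdiff_filter_ne_zero_eq_sdiff {S O : Finset V}
    (h : S ∩ A.filter (fun i => P i ≠ 0) = O ∩ A.filter (fun i => P i ≠ 2)) :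
    O \ A.filter (fun i => P i ≠ 0) = O \ A := by
  ext i
  have hi := Finset.ext_iff.mp h i
  simp only [mem_sdiff, mem_filter, mem_inter] at hi ⊢
  by_cases hP : P i = 0 <;> simp_all

end PauliConditions

section Measurement

variable {V : Type*} [Fintype V] [DecidableEq V] (G : SimpleGraph V) [DecidableRel G.Adj]
  (A : Finset V) (P : V → Fin 3)

theorem Xop_Zop_braApply_graphState (r : V → Fin 2) {S : Finset V}
    (hS : S ∩ A.filter (fun i => P i ≠ 0) = oddNbhd G S ∩ A.filter (fun i => P i ≠ 2)) :
    ∃ c : ℂ, ‖c‖ = 1 ∧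
      Xop (S \ A.filter fun i => P i ≠ 2) (Zop (oddNbhd G S \ A.filter fun i => P i ≠ 0)
        (braApply A (fun i => eigVec (P i) (r i)) (graphState G)))
      = c • braApply A (fun i => eigVec (P i) (r i)) (graphState G) := by
  set χ := fun i => eigVec (P i) (r i)
  set O := oddNbhd G S
  rw [sdiff_filter_ne_two_eq_sdiff hS, sdiff_filter_ne_zero_eq_sdiff hS]
  obtain ⟨ε, hε, hstab⟩ := Xop_Zop_oddNbhd_graphState G S
  have hloc := (inter_filter_eq_iff_forall_mem_pauliExponents A P S O).mp hS
  have hind : ∀ T : Finset V, ∀ i ∈ A, indicatorBits (T ∩ A) i = indicatorBits T i :=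
    fun T i hi => by simp [indicatorBits, hi]
  obtain ⟨μ, hμ, habsorb⟩ := braApply_Xop_Zop A χ (D := S ∩ A) (E := O ∩ A) inter_subset_right
    inter_subset_right (fun i hi => by
      rw [hind S i hi, hind O i hi]
      exact exists_conj_eigVec_add_mul_eq _ _ (hloc i hi)) (graphState G)
  have hsplit : Xop S (Zop O (graphState G))
      = Xop (S \ A) (Zop (O \ A) (Xop (S ∩ A) (Zop (O ∩ A) (graphState G)))) := by
    conv_lhs => rw [← sdiff_union_inter S A, ← sdiff_union_inter O A]
    rw [Xop_union (disjoint_sdiff_inter S A), Zop_union (disjoint_sdiff_inter O A),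
      Zop_Xop_of_disjoint (sdiff_disjoint.mono_right inter_subset_right)]
  have key := congrArg (braApply A χ) hstab
  rw [braApply_smul, hsplit, ← Xop_braApply A χ sdiff_disjoint, ← Zop_braApply A χ sdiff_disjoint,
    habsorb, Zop_smul, Xop_smul] at key
  have hμ0 : μ ≠ 0 := norm_ne_zero_iff.mp (hμ.symm ▸ one_ne_zero)
  refine ⟨μ⁻¹ * ε, by rw [norm_mul, norm_inv, hμ, hε, inv_one, one_mul], ?_⟩
  rw [mul_smul, ← key, smul_smul, inv_mul_cancel₀ hμ0, one_smul]

end Measurement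

section Overlap

variable {V : Type*} [Fintype V] [DecidableEq V] (G : SimpleGraph V) [DecidableRel G.Adj]
  (A : Finset V)

lemma sum_conj_braWeight_graphState_mul_eq_prod (χ : V → Fin 2 → ℂ) {B C D : Finset V}
    (hBD : Disjoint B D) :
    ∑ s, conj (braWeight A χ s * graphState G s)
        * (braWeight A χ (s + indicatorBits D) * Xop B (Zop C (graphState G)) (s + indicatorBits D))
      = zSign C (indicatorBits (B ∪ D)) * Complex.I ^ adjPairCount G (indicatorBits (B ∪ D))
          * 2⁻¹ ^ Fintype.card V
        * ∏ v, ∑ u : Fin 2, (if v ∈ A then χ v u * conj (χ v (u + indicatorBits D v)) else 1)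
          * (-1) ^ ((indicatorBits C v).val * u.val)
          * (-1) ^ ((indicatorBits (oddNbhd G (B ∪ D)) v).val * u.val) := by
  set S := B ∪ D
  set O := oddNbhd G S
  have hshift : ∀ s : V → Fin 2, s + indicatorBits D + indicatorBits B = s + indicatorBits S :=
    fun s => by rw [indicatorBits_union hBD, add_assoc, add_comm (indicatorBits D)]
  have hprod : ∀ s : V → Fin 2, ∏ v, (if v ∈ A then χ v (s v) * conj (χ v (s v + indicatorBits D v))
        else 1) * (-1) ^ ((indicatorBits C v).val * (s v).val)
        * (-1) ^ ((indicatorBits O v).val * (s v).val)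
      = conj (braWeight A χ s) * braWeight A χ (s + indicatorBits D) * zSign C s * zSign O s :=
    fun s => by
      rw [prod_mul_distrib, prod_mul_distrib, prod_ite_mem, univ_inter, prod_mul_distrib,
        zSign_eq_prod_indicatorBits (subset_univ C), zSign_eq_prod_indicatorBits (subset_univ O),
        braWeight, braWeight, map_prod]
      simp only [Complex.conj_conj, Pi.add_apply]
  rw [Fintype.prod_sum, mul_sum]
  refine sum_congr rfl fun s _ => ?_
  rw [hprod, Xop_apply, Zop_apply, hshift, graphState_add_indicatorBits, zSign_add, map_mul,
    conj_graphState]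
  linear_combination (conj (braWeight A χ s) * braWeight A χ (s + indicatorBits D) * zSign C s
    * zSign C (indicatorBits S) * Complex.I ^ adjPairCount G (indicatorBits S) * zSign O s)
    * graphState_mul_self G s

lemma eq_of_sum_neg_one_pow_mul_ne_zero {a b : Fin 2}
    (h : ∑ u : Fin 2, (-1 : ℂ) ^ (a.val * u.val) * (-1) ^ (b.val * u.val) ≠ 0) : a = b := by
  fin_cases a <;> fin_cases b <;> simp_all [Fin.sum_univ_two]

theorem exists_of_sum_conj_mul_Xop_Zop_braApply_ne_zero (P : V → Fin 3) (r : V → Fin 2)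
    {B C : Finset V} (hB : Disjoint B A) (hC : Disjoint C A)
    (h : ∑ t, conj (braApply A (fun i => eigVec (P i) (r i)) (graphState G) t)
      * Xop B (Zop C (braApply A (fun i => eigVec (P i) (r i)) (graphState G))) t ≠ 0) :
    ∃ S : Finset V,
      S ∩ A.filter (fun i => P i ≠ 0) = oddNbhd G S ∩ A.filter (fun i => P i ≠ 2) ∧
      S \ A.filter (fun i => P i ≠ 2) = B ∧ oddNbhd G S \ A.filter (fun i => P i ≠ 0) = C := by
  set χ := fun i => eigVec (P i) (r i)
  rw [Zop_braApply A χ hC, Xop_braApply A χ hB, sum_conj_braApply_mul_braApply] at h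
  obtain ⟨d, -, hd⟩ := exists_ne_zero_of_sum_ne_zero h
  have hdA : ∀ v ∉ A, d v = 0 := by
    by_contra hdA
    exact hd (if_neg hdA)
  rw [if_pos hdA] at hd
  set D := univ.filter fun v => d v = 1
  have hD : D ⊆ A := fun v hv => by
    by_contra hvA
    simp [D, hdA v hvA] at hv
  rw [eq_indicatorBits_filter d, sum_conj_braWeight_graphState_mul_eq_prod G A χ (hB.mono_right hD)]
    at hd
  have hsite := prod_ne_zero_iff.mp (right_ne_zero_of_mul hd)
  set S := B ∪ D
  have houtside : ∀ v ∉ A, (v ∈ C ↔ v ∈ oddNbhd G S) := fun v hv => by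
    have hv' := hsite v (mem_univ v)
    simp only [if_neg hv, one_mul] at hv'
    exact indicatorBits_eq_iff.mp (eq_of_sum_neg_one_pow_mul_ne_zero hv')
  have hinside :
      ∀ i ∈ A, (indicatorBits S i, indicatorBits (oddNbhd G S) i) ∈ pauliExponents (P i) :=
    fun i hi => by
      have hi' := hsite i (mem_univ i)
      simp only [if_pos hi, indicatorBits_of_notMem (disjoint_right.mp hC hi), Fin.val_zero,
        zero_mul, pow_zero, mul_one] at hi'
      have hSD : indicatorBits S i = indicatorBits D i := by
        simp [indicatorBits, S, disjoint_right.mp hB hi]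
      rw [hSD]
      exact mem_pauliExponents_of_sum_ne_zero _ _ _ _ hi'
  have hS := (inter_filter_eq_iff_forall_mem_pauliExponents A P S _).mpr hinside
  refine ⟨S, hS, ?_, ?_⟩
  · rw [sdiff_filter_ne_two_eq_sdiff hS, union_sdiff_distrib, sdiff_eq_self_of_disjoint hB,
      sdiff_eq_empty_iff_subset.mpr hD, union_empty]
  · rw [sdiff_filter_ne_zero_eq_sdiff hS]
    ext v
    by_cases hv : v ∈ A
    · simp [hv, disjoint_right.mp hC hv]
    · simp [hv, houtside v hv]

end Overlap

lemma sum_conj_mul_self_eq_norm2 {ι : Type*} [Fintype ι] (ψ : ι → ℂ) :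
    ∑ t, conj (ψ t) * ψ t = (norm2 ψ : ℂ) := by
  simp [norm2, Complex.conj_mul']

/-- Lemma `lem:meastab`: for a collection `P_A = {r_i P_i}_{i∈A}` of signed Pauli observables
(`P : V → Fin 3` with `0 = X`, `1 = Y`, `2 = Z`; signs `r : V → Fin 2`), with
`x(P_A) = {i ∈ A : P_i ∈ {X,Y}}`, `z(P_A) = {i ∈ A : P_i ∈ {Y,Z}}`, if
`|⟨P_A||G⟩| = 2^{−|A|/2}` then a Pauli operator `M = X_{Mx} Z_{Mz}` (acting on `V ∖ A`)
satisfies `M ⟨P_A||G⟩ ≃ ⟨P_A||G⟩` iff there is `S ⊆ V(G)` with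
`S ∩ z(P_A) = Odd(S) ∩ x(P_A)` and `M ≃ X_{S∖x(P_A)} Z_{Odd(S)∖z(P_A)}`. -/
theorem stmt10 {V : Type*} [Fintype V] [DecidableEq V] (G : SimpleGraph V)
    [DecidableRel G.Adj] (A : Finset V) (P : V → Fin 3) (r : V → Fin 2)
    (hstrong : norm2 (braApply A (fun i => eigVec (P i) (r i)) (graphState G))
      = (2 : ℝ) ^ (-(A.card : ℤ)))
    (Mx Mz : Finset V) (hMx : Mx ⊆ Aᶜ) (hMz : Mz ⊆ Aᶜ) :
    (∃ c : ℂ, ‖c‖ = 1 ∧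
        Xop Mx (Zop Mz (braApply A (fun i => eigVec (P i) (r i)) (graphState G)))
          = c • braApply A (fun i => eigVec (P i) (r i)) (graphState G)) ↔
      ∃ S : Finset V,
        S ∩ (A.filter fun i => P i ≠ 0) = oddNbhd G S ∩ (A.filter fun i => P i ≠ 2) ∧
        ∃ c : ℂ, ‖c‖ = 1 ∧ ∀ ψ : (V → Fin 2) → ℂ,
          Xop Mx (Zop Mz ψ)
            = c • Xop (S \ (A.filter fun i => P i ≠ 2))
                (Zop (oddNbhd G S \ (A.filter fun i => P i ≠ 0)) ψ) := by
  set φ := braApply A (fun i => eigVec (P i) (r i)) (graphState G)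
  constructor
  · rintro ⟨c, hc, hMφ⟩
    have hoverlap : ∑ t, conj (φ t) * Xop Mx (Zop Mz φ) t ≠ 0 := by
      have hφ : (norm2 φ : ℂ) ≠ 0 := by
        rw [hstrong]
        exact Complex.ofReal_ne_zero.mpr (zpow_ne_zero _ two_ne_zero)
      simp only [hMφ, Pi.smul_apply, smul_eq_mul, mul_left_comm _ c, ← mul_sum,
        sum_conj_mul_self_eq_norm2]
      exact mul_ne_zero (norm_ne_zero_iff.mp (hc ▸ one_ne_zero)) hφ
    obtain ⟨S, hS, hx, hz⟩ := exists_of_sum_conj_mul_Xop_Zop_braApply_ne_zero G A P r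
      (subset_compl_iff_disjoint_right.mp hMx) (subset_compl_iff_disjoint_right.mp hMz) hoverlap
    exact ⟨S, hS, 1, norm_one, fun ψ => by rw [hx, hz, one_smul]⟩
  · rintro ⟨S, hS, c₀, hc₀, hM⟩
    obtain ⟨c, hc, hφ⟩ := Xop_Zop_braApply_graphState G A P r hS
    exact ⟨c₀ * c, by rw [norm_mul, hc₀, hc, one_mul], by rw [hM, hφ, smul_smul]⟩
end

section
/- Let |φ⟩ be a normalized state of a register V of qubits with u ∈ V, written |φ⟩ = |+⟩_u|φ_+⟩ + |−⟩_u|φ_−⟩ (unnormalized components). If for α ∈ {0, π/2, π} the projections ⟨+^{XY}_α|_u|φ⟩ all have norm 1/√2 and |φ_+⟩, |φ_−⟩ are colinear, then there exist x ∈ {0,1} and a state |ψ⟩ such that |φ⟩ = |x⟩_u ⊗ |ψ⟩ up to global phase (i.e. the qubit u is separable and in a Z-eigenstate). -/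
open Complex ComplexConjugate InnerProductSpace

/-- `⟨b|_u |φ⟩`: the component of `φ` along the computational basis state `|b⟩` of qubit `u`. -/
def sliceAt {V : Type*} [DecidableEq V] (u : V) (b : Fin 2) (φ : (V → Fin 2) → ℂ) :
    ({v : V // v ≠ u} → Fin 2) → ℂ :=
  fun t => φ (fun v => if h : v = u then b else t ⟨v, h⟩)

lemma norm2_smul {ι : Type*} [Fintype ι] (c : ℂ) (ψ : ι → ℂ) :
    norm2 (c • ψ) = ‖c‖ ^ 2 * norm2 ψ := by
  simp only [norm2, Pi.smul_apply, smul_eq_mul, norm_mul, mul_pow, Finset.mul_sum]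

lemma norm2_eq_norm_sq {ι : Type*} [Fintype ι] (ψ : ι → ℂ) :
    norm2 ψ = ‖(WithLp.toLp 2 ψ : EuclideanSpace ℂ ι)‖ ^ 2 :=
  (EuclideanSpace.norm_sq_eq _).symm

section Slices

variable {V : Type*} [DecidableEq V] (u : V) (φ : (V → Fin 2) → ℂ)

lemma partialInner_eq_sliceAt [Fintype V] (χ : Fin 2 → ℂ) :
    partialInner u χ φ = conj (χ 0) • sliceAt u 0 φ + conj (χ 1) • sliceAt u 1 φ := by
  ext t
  simp [partialInner, sliceAt, Fin.sum_univ_two]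

lemma norm2_eq_add_sliceAt [Fintype V] :
    norm2 φ = norm2 (sliceAt u 0 φ) + norm2 (sliceAt u 1 φ) := by
  rw [norm2, ← (Equiv.funSplitAt u (Fin 2)).symm.sum_comp, Fintype.sum_prod_type,
    Fin.sum_univ_two]
  simp only [norm2, sliceAt, fun b t => funext (Equiv.funSplitAt_symm_apply u (Fin 2) (b, t))]

lemma eq_tensorAt_sliceAt (x : Fin 2) (h : ∀ b, b ≠ x → sliceAt u b φ = 0) :
    φ = tensorAt u (fun b => if b = x then 1 else 0) (sliceAt u x φ) := by
  ext s
  have hs : φ s = sliceAt u (s u) φ (fun v => s v.1) := by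
    unfold sliceAt
    congr 1
    ext v
    split_ifs with hv
    · rw [hv]
    · rfl
  by_cases hsx : s u = x
  · simp [tensorAt, hs, hsx]
  · simp [tensorAt, hs, hsx, h _ hsx]

end Slices

section InnerProduct

variable {E : Type*} [NormedAddCommGroup E] [InnerProductSpace ℂ E]

lemma inner_eq_zero_of_norm_sq_add_eq {x y : E} (h₁ : ‖x + y‖ ^ 2 = ‖x‖ ^ 2 + ‖y‖ ^ 2)
    (h₂ : ‖x - I • y‖ ^ 2 = ‖x‖ ^ 2 + ‖y‖ ^ 2) : ⟪x, y⟫_ℂ = 0 := by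
  rw [@norm_add_sq ℂ, RCLike.re_to_complex] at h₁
  rw [@norm_sub_sq ℂ, inner_smul_right, norm_smul, norm_I, one_mul, RCLike.re_to_complex,
    I_mul_re] at h₂
  exact Complex.ext (by rw [zero_re]; linarith) (by rw [zero_im]; linarith)

lemma eq_zero_or_eq_zero_of_inner_eq_zero_of_smul_eq {x y : E} {a b : ℂ} (hxy : ⟪x, y⟫_ℂ = 0)
    (hab : a • x = b • y) (hne : a ≠ 0 ∨ b ≠ 0) : x = 0 ∨ y = 0 := by
  have hx : a * ⟪x, x⟫_ℂ = 0 := by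
    rw [← inner_smul_right, hab, inner_smul_right, hxy, mul_zero]
  have hy : b * ⟪y, y⟫_ℂ = 0 := by
    rw [← inner_smul_right, ← hab, inner_smul_right, inner_eq_zero_symm.mp hxy, mul_zero]
  rw [mul_eq_zero, inner_self_eq_zero] at hx hy
  tauto

end InnerProduct

section Measurements

variable {V : Type*} [Fintype V] [DecidableEq V] (u : V) (φ : (V → Fin 2) → ℂ)

lemma partialInner_planePlus_two (α : ℝ) :
    partialInner u (planePlus 2 α) φ =
      (Real.sqrt 2 : ℂ)⁻¹ • (sliceAt u 0 φ + conj (exp (α * I)) • sliceAt u 1 φ) := by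
  rw [partialInner_eq_sliceAt]
  simp [planePlus, plusVec, minusVec, smul_add, smul_smul]

lemma partialInner_plusVec_zero :
    partialInner u (plusVec 0) φ = (Real.sqrt 2 : ℂ)⁻¹ • (sliceAt u 0 φ + sliceAt u 1 φ) := by
  rw [partialInner_eq_sliceAt]
  simp [plusVec, smul_add]

lemma partialInner_minusVec_zero :
    partialInner u (minusVec 0) φ = (Real.sqrt 2 : ℂ)⁻¹ • (sliceAt u 0 φ - sliceAt u 1 φ) := by
  rw [partialInner_eq_sliceAt]
  simp [minusVec, sub_eq_add_neg]

lemma norm2_partialInner_planePlus_two (α : ℝ) :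
    norm2 (partialInner u (planePlus 2 α) φ) =
      norm2 (sliceAt u 0 φ + conj (exp (α * I)) • sliceAt u 1 φ) / 2 := by
  rw [partialInner_planePlus_two, norm2_smul, norm_inv, Complex.norm_real, Real.norm_eq_abs,
    abs_of_nonneg (Real.sqrt_nonneg 2), inv_pow, Real.sq_sqrt zero_le_two, inv_mul_eq_div]

lemma exists_smul_sliceAt_eq_of_colinear (hcol : ∃ c : ℂ,
      partialInner u (minusVec 0) φ = c • partialInner u (plusVec 0) φ ∨
      partialInner u (plusVec 0) φ = c • partialInner u (minusVec 0) φ) :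
    ∃ a b : ℂ, (a ≠ 0 ∨ b ≠ 0) ∧ a • sliceAt u 0 φ = b • sliceAt u 1 φ := by
  have hsqrt : (Real.sqrt 2 : ℂ)⁻¹ ≠ 0 := by simp
  obtain ⟨c, hc | hc⟩ := hcol
  · rw [partialInner_minusVec_zero, partialInner_plusVec_zero, smul_comm c] at hc
    refine ⟨1 - c, 1 + c, ?_, ?_⟩
    · by_contra! h
      exact two_ne_zero (by linear_combination h.1 + h.2 : (2 : ℂ) = 0)
    · linear_combination (norm := module) smul_right_injective _ hsqrt hc
  · rw [partialInner_minusVec_zero, partialInner_plusVec_zero, smul_comm c] at hc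
    refine ⟨1 - c, -(1 + c), ?_, ?_⟩
    · by_contra! h
      exact two_ne_zero (by linear_combination h.1 - h.2 : (2 : ℂ) = 0)
    · linear_combination (norm := module) smul_right_injective _ hsqrt hc

end Measurements

/-- The XY-plane is the one complementary to the Pauli `Z` (index `2`); the `X`-eigenvectors are
`plusVec 0` and `minusVec 0`. -/
theorem stmt12 {V : Type*} [Fintype V] [DecidableEq V] (u : V) (φ : (V → Fin 2) → ℂ)
    (hφ : norm2 φ = 1)
    (hhalf : ∀ α ∈ ({0, Real.pi / 2, Real.pi} : Set ℝ),
      norm2 (partialInner u (planePlus 2 α) φ) = 1 / 2)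
    (hcol : ∃ c : ℂ,
      partialInner u (minusVec 0) φ = c • partialInner u (plusVec 0) φ ∨
      partialInner u (plusVec 0) φ = c • partialInner u (minusVec 0) φ) :
    ∃ (x : Fin 2) (ψ : ({v : V // v ≠ u} → Fin 2) → ℂ) (c : ℂ), ‖c‖ = 1 ∧
      φ = c • tensorAt u (fun b => if b = x then 1 else 0) ψ := by
  set x : EuclideanSpace ℂ _ := WithLp.toLp 2 (sliceAt u 0 φ) with hx
  set y : EuclideanSpace ℂ _ := WithLp.toLp 2 (sliceAt u 1 φ) with hy
  have hnorm : ‖x‖ ^ 2 + ‖y‖ ^ 2 = 1 := by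
    rw [← hφ, norm2_eq_add_sliceAt u, norm2_eq_norm_sq, norm2_eq_norm_sq]
  have hplane : ∀ α ∈ ({0, Real.pi / 2, Real.pi} : Set ℝ),
      ‖x + conj (exp (α * I)) • y‖ ^ 2 = ‖x‖ ^ 2 + ‖y‖ ^ 2 := by
    intro α hα
    have h := hhalf α hα
    rw [norm2_partialInner_planePlus_two, norm2_eq_norm_sq, WithLp.toLp_add, WithLp.toLp_smul,
      ← hx, ← hy] at h
    linarith
  have horth : ⟪x, y⟫_ℂ = 0 := by
    refine inner_eq_zero_of_norm_sq_add_eq ?_ ?_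
    · simpa using hplane 0 (by simp)
    · simpa [exp_pi_div_two_mul_I, sub_eq_add_neg] using hplane (Real.pi / 2) (by simp)
  obtain ⟨a, b, hne, hab⟩ := exists_smul_sliceAt_eq_of_colinear u φ hcol
  have hzero : sliceAt u 0 φ = 0 ∨ sliceAt u 1 φ = 0 := by
    simpa [x, y] using eq_zero_or_eq_zero_of_inner_eq_zero_of_smul_eq horth
      (congrArg (WithLp.toLp 2) hab) hne
  rcases hzero with h0 | h1
  · refine ⟨1, sliceAt u 1 φ, 1, norm_one, ?_⟩
    rw [one_smul]
    exact eq_tensorAt_sliceAt u φ 1 (by simp [Fin.forall_fin_two, h0])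
  · refine ⟨0, sliceAt u 0 φ, 1, norm_one, ?_⟩
    rw [one_smul]
    exact eq_tensorAt_sliceAt u φ 0 (by simp [Fin.forall_fin_two, h1])
end
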